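/- If there exists a tuple r̄ ∈ (0,1)ⁿ with coordinates algebraically independent over ℚ such that R_r̄ is discretely ordered, then R_r̄' is discretely ordered for every tuple r̄' ∈ (0,1)ⁿ with coordinates algebraically independent over ℚ. -/

import Mathlib

open FirstOrder FirstOrder.Language

/-- Function symbols of the first-order language of ordered rings. -/
inductive ORingFunc : ℕ → Type
  | add : ORingFunc 2
  | mul : ORingFunc 2
  | neg : ORingFunc 1
  | zero : ORingFunc 0
  | one : ORingFunc 0

/-- Relation symbols of the first-order language of ordered rings. -/
inductive ORingRel : ℕ → Type
  | le : ORingRel 2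

/-- The first-order language `L` of ordered rings, with signature `(+, −, ·, ≤, 0, 1)`. -/
def ORing : Language := ⟨ORingFunc, ORingRel⟩

/-- The canonical interpretation of the language of ordered rings in any type
carrying the corresponding operations. -/
instance ORingStructure (R : Type*) [Add R] [Mul R] [Neg R] [Zero R] [One R] [LE R] :
    ORing.Structure R where
  funMap {n} f v :=
    match n, f with
    | _, ORingFunc.add => v 0 + v 1
    | _, ORingFunc.mul => v 0 * v 1
    | _, ORingFunc.neg => -(v 0)
    | _, ORingFunc.zero => 0
    | _, ORingFunc.one => 1
  RelMap {n} r v :=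
    match n, r with
    | _, ORingRel.le => v 0 ≤ v 1

/-- An `L`-sentence is universal if it is a block of universal quantifiers applied
to a quantifier-free formula. -/
def IsUniversalSentence (φ : ORing.Sentence) : Prop :=
  ∃ (k : ℕ) (ψ : ORing.BoundedFormula Empty k), ψ.IsQF ∧ φ = ψ.alls

/-- An ordered ring is diophantine correct if it satisfies every universal
`L`-sentence true in the ordered ring of integers. -/
def DiophCorrect (R : Type*) [Add R] [Mul R] [Neg R] [Zero R] [One R] [LE R] : Prop :=
  ∀ φ : ORing.Sentence, IsUniversalSentence φ → (ℤ ⊨ φ) → (R ⊨ φ)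

/-- The ring of real-valued functions on `(0, ∞)` (with pointwise operations),
carrying the "eventual" order used on rings of Puiseux polynomials. -/
def PuiseuxFuns : Type := Set.Ioi (0 : ℝ) → ℝ

noncomputable instance : CommRing PuiseuxFuns := Pi.commRing

/-- `f ≤ g` iff `f t ≤ g t` for all sufficiently large `t`.  On rings of Puiseux
polynomials this induces the linear order in which `f > 0` iff `f t > 0` for all
sufficiently large `t`. -/
instance : LE PuiseuxFuns :=
  ⟨fun f g => ∃ T : ℝ, ∀ t : Set.Ioi (0 : ℝ), T < (t : ℝ) → f t ≤ g t⟩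

/-- A real Puiseux polynomial: a function of the form
`t ↦ a₁ t^{q₁} + … + a_k t^{q_k}` (with `aⱼ ∈ ℝ`, `qⱼ ∈ ℚ`) on `(0, ∞)`. -/
def IsPuiseuxPoly (f : PuiseuxFuns) : Prop :=
  ∃ (k : ℕ) (a : Fin k → ℝ) (q : Fin k → ℚ),
    ∀ t : Set.Ioi (0 : ℝ), f t = ∑ j, a j * (t : ℝ) ^ (q j : ℝ)

/-- A discretely ordered structure: no element lies strictly between `0` and `1`
(expressed using `≤` only, since the strict order is definable from it). -/
def DiscretelyOrderedLE (R : Type*) [Zero R] [One R] [LE R] : Prop :=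
  ∀ x : R, ¬((0 : R) ≤ x ∧ ¬x ≤ 0 ∧ x ≤ 1 ∧ ¬(1 : R) ≤ x)

/-- Given polynomials `g₁(t), g₂(t,x₁), …, gₙ(t,x₁,…,x_{n−1})` and reals `r₁,…,rₙ`,
this is the ring `R_r̄ = ℤ[t, f₁(t) − r₁, …, fₙ(t) − rₙ]`, where
`fᵢ(t) = gᵢ(t, r₁, …, r_{i−1})`, as a subring of the functions on `(0,∞)`. -/
noncomputable def puiseuxGen {n : ℕ} (g : ∀ i : Fin n, MvPolynomial (Fin ((i : ℕ) + 1)) ℝ)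
    (r : Fin n → ℝ) : Subring PuiseuxFuns :=
  Subring.closure (insert (fun t : Set.Ioi (0 : ℝ) => (t : ℝ))
    (Set.range fun i : Fin n =>
      (fun t : Set.Ioi (0 : ℝ) =>
        MvPolynomial.eval
          (fun m : Fin ((i : ℕ) + 1) =>
            if (m : ℕ) = 0 then (t : ℝ)
            else r ⟨(m : ℕ) - 1, by have := m.isLt; have := i.isLt; omega⟩)
          (g i) - r i : PuiseuxFuns)))

/-- The tuple `(y₀, …, y_i)` of real values extracted from an integer tuple
`(y₀, …, yₙ)`, used as the argument list of `σ_{i+1}`. -/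
def intTup {n : ℕ} (y : Fin (n + 1) → ℤ) (i : Fin n) : Fin ((i : ℕ) + 1) → ℝ :=
  fun p => (y ⟨(p : ℕ), by have := p.isLt; have := i.isLt; omega⟩ : ℝ)

/-!
Let `K` be the field of real algebraic numbers. Every element of `R_r̄` is the value at `x = r̄` of
a polynomial `P ∈ K[x₁, …, xₙ][t]` that is built from the generators `t, fᵢ(t) − xᵢ` independently
of `r̄`. If such an element lies strictly between `0` and `1` for `r̄'`, it is a bounded polynomial
in `t`, hence a constant `c'`; as `r̄'` is algebraically independent over `K`, `P` itself is then a
constant `D ∈ K[x]` with `D(r̄') = c'`. For the same reason `D(r̄)` is not an integer (otherwise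
`D` would be that integer, and so would `c'`), so `P − ⌊D(r̄)⌋` yields an element of `R_r̄`
strictly between `0` and `1`.
-/

open Filter Polynomial

lemma MvPolynomial.mem_range_map_algebraMap_algebraicClosure {σ F E : Type*} [Field F] [Field E]
    [Algebra F E] (p : MvPolynomial σ E) (hp : ∀ d, IsAlgebraic F (p.coeff d)) :
    p ∈ Set.range (map (algebraMap (algebraicClosure F E) E)) := by
  rw [mem_range_map_iff_coeffs_subset]
  intro a ha
  obtain ⟨d, -, rfl⟩ := mem_coeffs_iff.1 ha
  exact ⟨⟨_, mem_algebraicClosure_iff.2 (hp d)⟩, rfl⟩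

section AlgebraicIndependent

variable {σ K : Type*} [CommRing K] [Algebra K ℝ] {r r' : σ → ℝ}

lemma AlgebraicIndependent.aeval_eq_intCast_iff (hr : AlgebraicIndependent K r)
    {D : MvPolynomial σ K} {m : ℤ} : MvPolynomial.aeval r D = m ↔ D = m := by
  rw [← (algebraicIndependent_iff_injective_aeval.1 hr).eq_iff, map_intCast]

lemma AlgebraicIndependent.eq_C_of_map_aeval_eq_C (hr : AlgebraicIndependent K r)
    {P : (MvPolynomial σ K)[X]} {c : ℝ} (hP : P.map (MvPolynomial.aeval r).toRingHom = C c) :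
    P = C (P.coeff 0) := by
  apply eq_C_of_natDegree_eq_zero
  rw [← natDegree_map_eq_of_injective (algebraicIndependent_iff_injective_aeval.1 hr), hP,
    natDegree_C]

lemma AlgebraicIndependent.exists_map_aeval_sub_intCast_eq_C (hr : AlgebraicIndependent K r)
    (hr' : AlgebraicIndependent K r') {P : (MvPolynomial σ K)[X]} {c' : ℝ}
    (hc' : c' ∈ Set.Ioo (0 : ℝ) 1) (hP : P.map (MvPolynomial.aeval r').toRingHom = C c') :
    ∃ m : ℤ, ∃ c ∈ Set.Ioo (0 : ℝ) 1, (P - m).map (MvPolynomial.aeval r).toRingHom = C c := by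
  set D := P.coeff 0
  have hPD : P = C D := hr'.eq_C_of_map_aeval_eq_C hP
  have hD : MvPolynomial.aeval r' D = c' := by
    rwa [hPD, map_C, C_inj] at hP
  have hfract : 0 < Int.fract (MvPolynomial.aeval r D) := by
    refine Int.fract_pos.2 fun h => ?_
    rw [hr.aeval_eq_intCast_iff, ← hr'.aeval_eq_intCast_iff, hD] at h
    have h0 : (0 : ℤ) < ⌊MvPolynomial.aeval r D⌋ := by exact_mod_cast h ▸ hc'.1
    have h1 : ⌊MvPolynomial.aeval r D⌋ < 1 := by exact_mod_cast h ▸ hc'.2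
    omega
  refine ⟨⌊MvPolynomial.aeval r D⌋, _, ⟨hfract, Int.fract_lt_one _⟩, ?_⟩
  rw [hPD, ← C_eq_intCast, ← C_sub, map_C, Int.fract]
  simp

end AlgebraicIndependent

namespace PuiseuxFuns

noncomputable def ofPoly : ℝ[X] →+* PuiseuxFuns :=
  RingHom.pi fun t : Set.Ioi (0 : ℝ) => evalRingHom (t : ℝ)

lemma ofPoly_apply (p : ℝ[X]) (t : Set.Ioi (0 : ℝ)) : ofPoly p t = p.eval (t : ℝ) := rfl

lemma ofPoly_le_ofPoly_iff {p q : ℝ[X]} :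
    ofPoly p ≤ ofPoly q ↔ ∀ᶠ t in atTop, p.eval t ≤ q.eval t := by
  constructor
  · rintro ⟨T, hT⟩
    filter_upwards [eventually_gt_atTop (max T 0)] with t ht
    exact hT ⟨t, (le_max_right T 0).trans_lt ht⟩ ((le_max_left T 0).trans_lt ht)
  · intro h
    obtain ⟨T, hT⟩ := eventually_atTop.1 h
    exact ⟨T, fun t ht => hT t ht.le⟩

lemma ofPoly_strictlyBetween_iff (p : ℝ[X]) :
    (0 ≤ ofPoly p ∧ ¬ofPoly p ≤ 0 ∧ ofPoly p ≤ 1 ∧ ¬1 ≤ ofPoly p) ↔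
      ∃ c ∈ Set.Ioo (0 : ℝ) 1, p = C c := by
  rw [show (0 : PuiseuxFuns) = ofPoly (C 0) by simp, show (1 : PuiseuxFuns) = ofPoly (C 1) by simp]
  simp only [ofPoly_le_ofPoly_iff, eval_C]
  constructor
  · rintro ⟨h0, hn0, h1, hn1⟩
    have hbdd : p.degree ≤ 0 := by
      refine p.isBoundedUnder_abs_atTop_iff.1 ⟨1, eventually_map.2 ?_⟩
      filter_upwards [h0, h1] with t ht0 ht1
      exact abs_le.2 ⟨by linarith, ht1⟩
    rw [eq_C_of_degree_le_zero hbdd] at hn0 hn1 ⊢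
    simp only [eval_C, eventually_const, not_le] at hn0 hn1
    exact ⟨_, ⟨hn0, hn1⟩, rfl⟩
  · rintro ⟨c, ⟨hc0, hc1⟩, rfl⟩
    simp only [eval_C, eventually_const, not_le]
    exact ⟨hc0.le, hc0, hc1.le, hc1⟩

lemma discretelyOrderedLE_subring_iff (S : Subring PuiseuxFuns) :
    DiscretelyOrderedLE S ↔ ∀ x ∈ S, ¬(0 ≤ x ∧ ¬x ≤ 0 ∧ x ≤ 1 ∧ ¬1 ≤ x) :=
  Subtype.forall

variable {K : Type*} [CommRing K] [Algebra K ℝ] {n : ℕ}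

noncomputable def evalAt (r : Fin n → ℝ) : (MvPolynomial (Fin n) K)[X] →+* PuiseuxFuns :=
  ofPoly.comp (mapRingHom (MvPolynomial.aeval r).toRingHom)

/-- The variables of `gᵢ`, read in `K[x₁, …, xₙ][t]`: the first one is `t`, the others are the
`xⱼ` with `j < i`. -/
noncomputable def formalArgs (i : Fin n) : Fin ((i : ℕ) + 1) → (MvPolynomial (Fin n) K)[X] :=
  fun m => if (m : ℕ) = 0 then X
    else C (MvPolynomial.X ⟨(m : ℕ) - 1, by have := m.isLt; have := i.isLt; omega⟩)

noncomputable def formalGenerators (gK : ∀ i : Fin n, MvPolynomial (Fin ((i : ℕ) + 1)) K) :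
    Set (MvPolynomial (Fin n) K)[X] :=
  insert X (Set.range fun i => MvPolynomial.aeval (formalArgs i) (gK i) - C (MvPolynomial.X i))

lemma evalAt_X (r : Fin n → ℝ) :
    evalAt (K := K) r X = (fun t : Set.Ioi (0 : ℝ) => (t : ℝ) : PuiseuxFuns) := by
  funext t
  simp [evalAt, ofPoly_apply]

lemma evalAt_aeval_formalArgs_sub (gK : ∀ i : Fin n, MvPolynomial (Fin ((i : ℕ) + 1)) K)
    (r : Fin n → ℝ) (i : Fin n) :
    evalAt r (MvPolynomial.aeval (formalArgs i) (gK i) -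
        C (MvPolynomial.X i : MvPolynomial (Fin n) K)) =
      (fun t : Set.Ioi (0 : ℝ) =>
        MvPolynomial.eval
          (fun m : Fin ((i : ℕ) + 1) =>
            if (m : ℕ) = 0 then (t : ℝ)
            else r ⟨(m : ℕ) - 1, by have := m.isLt; have := i.isLt; omega⟩)
          (MvPolynomial.map (algebraMap K ℝ) (gK i)) - r i : PuiseuxFuns) := by
  funext t
  set ψ := (evalRingHom (t : ℝ)).comp (mapRingHom (MvPolynomial.aeval (R := K) r).toRingHom)
  have hψ : ψ.comp (algebraMap K (MvPolynomial (Fin n) K)[X]) = algebraMap K ℝ := by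
    ext k
    simp [ψ]
  have hargs : ψ ∘ formalArgs (K := K) i = fun m : Fin ((i : ℕ) + 1) =>
      if (m : ℕ) = 0 then (t : ℝ)
      else r ⟨(m : ℕ) - 1, by have := m.isLt; have := i.isLt; omega⟩ := by
    funext m
    by_cases hm : (m : ℕ) = 0 <;> simp [ψ, formalArgs, hm]
  change ψ _ = _
  rw [map_sub, MvPolynomial.aeval_def, MvPolynomial.eval₂_comp_left, hψ, hargs,
    MvPolynomial.eval_map]
  simp [ψ]

lemma puiseuxGen_map_algebraMap_eq (gK : ∀ i : Fin n, MvPolynomial (Fin ((i : ℕ) + 1)) K)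
    (r : Fin n → ℝ) :
    puiseuxGen (fun i => MvPolynomial.map (algebraMap K ℝ) (gK i)) r =
      (Subring.closure (formalGenerators gK)).map (evalAt r) := by
  refine Eq.symm ((RingHom.map_closure _ _).trans ?_)
  rw [formalGenerators, Set.image_insert_eq, ← Set.range_comp]
  congr 2
  · exact evalAt_X r
  · exact congrArg Set.range (_root_.funext (evalAt_aeval_formalArgs_sub gK r))

lemma discretelyOrderedLE_map_evalAt_iff (S : Subring (MvPolynomial (Fin n) K)[X])
    (r : Fin n → ℝ) :
    DiscretelyOrderedLE ((S.map (evalAt r)) : Subring PuiseuxFuns) ↔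
      ∀ P ∈ S, ∀ c ∈ Set.Ioo (0 : ℝ) 1, P.map (MvPolynomial.aeval r).toRingHom ≠ C c := by
  rw [discretelyOrderedLE_subring_iff]
  constructor
  · intro h P hP c hc hPc
    exact h _ ⟨P, hP, rfl⟩ ((ofPoly_strictlyBetween_iff _).2 ⟨c, hc, hPc⟩)
  · rintro h _ ⟨P, hP, rfl⟩ hx
    obtain ⟨c, hc, hPc⟩ := (ofPoly_strictlyBetween_iff _).1 hx
    exact h P hP c hc hPc

end PuiseuxFuns

open PuiseuxFuns in
theorem discretelyOrdered_of_discretelyOrdered_general (n : ℕ)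
    (g : ∀ i : Fin n, MvPolynomial (Fin ((i : ℕ) + 1)) ℝ)
    (halg : ∀ (i : Fin n) (d : Fin ((i : ℕ) + 1) →₀ ℕ),
      IsAlgebraic ℚ (MvPolynomial.coeff d (g i)))
    (hex : ∃ r : Fin n → ℝ, (∀ i, r i ∈ Set.Ioo (0 : ℝ) 1) ∧
      AlgebraicIndependent ℚ r ∧ DiscretelyOrderedLE ↥(puiseuxGen g r)) :
    ∀ r' : Fin n → ℝ, (∀ i, r' i ∈ Set.Ioo (0 : ℝ) 1) → AlgebraicIndependent ℚ r' →
      DiscretelyOrderedLE ↥(puiseuxGen g r') := by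
  obtain ⟨r, -, hr, hdisc⟩ := hex
  rintro r' - hr'
  choose gK hgK using fun i =>
    MvPolynomial.mem_range_map_algebraMap_algebraicClosure (g i) (halg i)
  obtain rfl : (fun i => MvPolynomial.map (algebraMap _ ℝ) (gK i)) = g := funext hgK
  rw [puiseuxGen_map_algebraMap_eq, discretelyOrderedLE_map_evalAt_iff] at hdisc ⊢
  intro P hP c' hc' hPc'
  obtain ⟨m, c, hc, hPc⟩ :=
    hr.algebraicClosure.exists_map_aeval_sub_intCast_eq_C hr'.algebraicClosure hc' hPc'
  exact hdisc (P - m) (sub_mem hP (intCast_mem _ m)) c hc hPc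

/-- If `R_r̄` is discretely ordered for one tuple `r̄ ∈ (0,1)ⁿ` with algebraically
independent coordinates, then it is discretely ordered for every such tuple. -/
theorem discretelyOrdered_of_discretelyOrdered (n : ℕ) (hn : 1 ≤ n)
    (g : ∀ i : Fin n, MvPolynomial (Fin ((i : ℕ) + 1)) ℝ)
    (halg : ∀ (i : Fin n) (d : Fin ((i : ℕ) + 1) →₀ ℕ),
      IsAlgebraic ℚ (MvPolynomial.coeff d (g i)))
    (hex : ∃ r : Fin n → ℝ, (∀ i, r i ∈ Set.Ioo (0 : ℝ) 1) ∧
      AlgebraicIndependent ℚ r ∧ DiscretelyOrderedLE ↥(puiseuxGen g r)) :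
    ∀ r' : Fin n → ℝ, (∀ i, r' i ∈ Set.Ioo (0 : ℝ) 1) → AlgebraicIndependent ℚ r' →
      DiscretelyOrderedLE ↥(puiseuxGen g r') :=
  discretelyOrdered_of_discretelyOrdered_general n g halg hex
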